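/- arXiv:2106.02693 — 5 statements merged into one kernel-verified Lean document; each statement's English description precedes it below -/
import Mathlib

section
/- Let μ be a σ-finite measure on a measurable space Y, let q_a and q_b be probability densities with respect to μ, let n_a, n_b be positive integers, n = n_a + n_b, and set p°(y) = (n_a/n)·q_a(y) + (n_b/n)·q_b(y), with ratios over p° defined as 0 where p° = 0. Let P be a probability measure on Y with density p with respect to μ. Then ∫ [∏_{i=1}^{n_a} q_a(x_i)/p°(x_i)] · [∏_{i=n_a+1}^{n} q_b(x_i)/p°(x_i)] dP^{⊗n}(x_1,…,x_n) ≤ 1. -/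
/-! Under `P^{⊗n}` the expectation of a product of one-coordinate ratios `r_i` is `∏ ∫ r_i dP`.
Pointwise `∑ r_i = (n_a q_a + n_b q_b) / p° ≤ n`, so `∑ ∫ r_i dP ≤ n`, and AM–GM in the form
`z ≤ exp (z - 1)` turns this into `∏ ∫ r_i dP ≤ 1`. -/

open MeasureTheory ENNReal Finset

theorem Real.prod_le_one_of_sum_le_card {ι : Type*} (s : Finset ι) (z : ι → ℝ)
    (hz : ∀ i ∈ s, 0 ≤ z i) (hsum : ∑ i ∈ s, z i ≤ #s) : ∏ i ∈ s, z i ≤ 1 :=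
  calc ∏ i ∈ s, z i ≤ ∏ i ∈ s, Real.exp (z i - 1) :=
        prod_le_prod hz fun i _ => by linarith [Real.add_one_le_exp (z i - 1)]
    _ = Real.exp (∑ i ∈ s, z i - #s) := by simp [← Real.exp_sum, sum_sub_distrib]
    _ ≤ 1 := Real.exp_le_one_iff.2 (by linarith)

theorem ENNReal.prod_le_one_of_sum_le_card {ι : Type*} (s : Finset ι) (z : ι → ℝ≥0∞)
    (hsum : ∑ i ∈ s, z i ≤ #s) : ∏ i ∈ s, z i ≤ 1 := by
  have hfin : ∀ i ∈ s, z i ≠ ∞ := fun i hi =>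
    ne_top_of_le_ne_top (natCast_ne_top _) ((single_le_sum (fun _ _ => zero_le) hi).trans hsum)
  have hreal := Real.prod_le_one_of_sum_le_card s (fun i => (z i).toReal)
    (fun _ _ => toReal_nonneg) (by
      rw [← toReal_sum hfin, ← toReal_natCast]
      exact toReal_mono (natCast_ne_top _) hsum)
  rw [← toReal_prod] at hreal
  exact (toReal_le_toReal (prod_ne_top hfin) one_ne_top).1 (by simpa using hreal)

theorem lintegral_pi_prod_eq_prod {ι : Type*} [Fintype ι] {Ω : ι → Type*}
    [∀ i, MeasurableSpace (Ω i)] (μ : ∀ i, Measure (Ω i)) [∀ i, IsProbabilityMeasure (μ i)]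
    (f : ∀ i, Ω i → ℝ≥0∞) (hf : ∀ i, Measurable (f i)) :
    ∫⁻ x, ∏ i, f i (x i) ∂Measure.pi μ = ∏ i, ∫⁻ y, f i y ∂μ i := by
  rw [ProbabilityTheory.lintegral_prod_eq_prod_lintegral_of_indepFun _ _
    (ProbabilityTheory.iIndepFun_pi fun i => (hf i).aemeasurable)
    fun i => (hf i).comp (measurable_pi_apply i)]
  exact prod_congr rfl fun i _ => (measurePreserving_eval μ i).lintegral_comp (hf i)

theorem lintegral_pi_prod_le_one_of_sum_le_card {ι Y : Type*} [Fintype ι] [MeasurableSpace Y]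
    (P : Measure Y) [IsProbabilityMeasure P] (f : ι → Y → ℝ≥0∞) (hf : ∀ i, Measurable (f i))
    (hsum : ∀ y, ∑ i, f i y ≤ Fintype.card ι) :
    ∫⁻ x, ∏ i, f i (x i) ∂Measure.pi (fun _ => P) ≤ 1 := by
  rw [lintegral_pi_prod_eq_prod _ f hf]
  refine ENNReal.prod_le_one_of_sum_le_card _ _ ?_
  calc ∑ i, ∫⁻ y, f i y ∂P = ∫⁻ y, ∑ i, f i y ∂P := (lintegral_finsetSum _ fun i _ => hf i).symm
    _ ≤ ∫⁻ _, (Fintype.card ι : ℝ≥0∞) ∂P := lintegral_mono hsum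
    _ = #univ := by simp

theorem Fin.sum_univ_add_ite_lt {M : Type*} [AddCommMonoid M] (m n : ℕ) (u v : M) :
    ∑ i : Fin (m + n), (if (i : ℕ) < m then u else v) = m • u + n • v := by
  simp [Fin.sum_univ_add]

theorem ENNReal.natCast_mul_ratio_add_le {m n : ℕ} {a b p : ℝ≥0∞}
    (hp : p = m / (m + n) * a + n / (m + n) * b) :
    m * (if p = 0 then 0 else a / p) + n * (if p = 0 then 0 else b / p) ≤ m + n := by
  split_ifs with hp0
  · simp
  have hmix : m * a + n * b = (m + n) * p := by
    rcases eq_or_ne ((m : ℝ≥0∞) + n) 0 with hmn | hmn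
    · obtain ⟨hm, hn⟩ := add_eq_zero.1 hmn
      simp [hm, hn]
    · have hcancel : ∀ k : ℕ, ((m : ℝ≥0∞) + n) * (k / (m + n)) = k := fun k =>
        ENNReal.mul_div_cancel hmn (add_ne_top.2 ⟨natCast_ne_top _, natCast_ne_top _⟩)
      rw [hp, mul_add, ← mul_assoc, ← mul_assoc, hcancel, hcancel]
  calc m * (a / p) + n * (b / p) = (m * a + n * b) / p := by
        simp only [mul_div_assoc, ENNReal.add_div]
    _ ≤ m + n := div_le_of_le_mul hmix.le

theorem two_stream_evariable_general {Y : Type*} [MeasurableSpace Y]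
    (qa qb : Y → ℝ≥0∞) (hqa : Measurable qa) (hqb : Measurable qb)
    (na nb : ℕ)
    (P : Measure Y) [IsProbabilityMeasure P]
    (p0 : Y → ℝ≥0∞)
    (hp0 : p0 = fun y => (↑na / (↑na + ↑nb) : ℝ≥0∞) * qa y + (↑nb / (↑na + ↑nb) : ℝ≥0∞) * qb y)
    (ra rb : Y → ℝ≥0∞)
    (hra : ra = fun y => if p0 y = 0 then 0 else qa y / p0 y)
    (hrb : rb = fun y => if p0 y = 0 then 0 else qb y / p0 y) :
    ∫⁻ x : Fin (na + nb) → Y,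
        ∏ i : Fin (na + nb), (if (i : ℕ) < na then ra (x i) else rb (x i))
        ∂(Measure.pi fun _ : Fin (na + nb) => P) ≤ 1 := by
  have hp0m : Measurable p0 := hp0 ▸ (hqa.const_mul _).add (hqb.const_mul _)
  have hzero : MeasurableSet {y | p0 y = 0} := hp0m (measurableSet_singleton 0)
  have hram : Measurable ra := hra ▸ Measurable.ite hzero measurable_const (hqa.div hp0m)
  have hrbm : Measurable rb := hrb ▸ Measurable.ite hzero measurable_const (hqb.div hp0m)
  refine lintegral_pi_prod_le_one_of_sum_le_card P
    (fun (i : Fin (na + nb)) y => if (i : ℕ) < na then ra y else rb y)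
    (fun i => by by_cases h : (i : ℕ) < na <;> simp [h, hram, hrbm]) fun y => ?_
  rw [Fin.sum_univ_add_ite_lt, nsmul_eq_mul, nsmul_eq_mul, Fintype.card_fin, Nat.cast_add, hra, hrb]
  exact ENNReal.natCast_mul_ratio_add_le (congrFun hp0 y)

/-- Theorem 1, part 1, general density form. For probability densities
`qa, qb` w.r.t. a σ-finite measure `μ`, `p° = (n_a/n)·qa + (n_b/n)·qb` (ratios defined as `0`
where `p° = 0`), and `P` a probability measure with density `p` w.r.t. `μ`, the two-stream
statistic has `P^{⊗n}`-expectation at most `1`. -/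
theorem two_stream_evariable {Y : Type*} [MeasurableSpace Y]
    (μ : Measure Y) [SigmaFinite μ]
    (qa qb : Y → ℝ≥0∞) (hqa : Measurable qa) (hqb : Measurable qb)
    (hqa1 : ∫⁻ y, qa y ∂μ = 1) (hqb1 : ∫⁻ y, qb y ∂μ = 1)
    (na nb : ℕ) (hna : 0 < na) (hnb : 0 < nb)
    (p : Y → ℝ≥0∞) (hp : Measurable p) (hp1 : ∫⁻ y, p y ∂μ = 1)
    (P : Measure Y) [IsProbabilityMeasure P] (hP : P = μ.withDensity p)
    (p0 : Y → ℝ≥0∞)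
    (hp0 : p0 = fun y => (↑na / (↑na + ↑nb) : ℝ≥0∞) * qa y + (↑nb / (↑na + ↑nb) : ℝ≥0∞) * qb y)
    (ra rb : Y → ℝ≥0∞)
    (hra : ra = fun y => if p0 y = 0 then 0 else qa y / p0 y)
    (hrb : rb = fun y => if p0 y = 0 then 0 else qb y / p0 y) :
    ∫⁻ x : Fin (na + nb) → Y,
        ∏ i : Fin (na + nb), (if (i : ℕ) < na then ra (x i) else rb (x i))
        ∂(Measure.pi fun _ : Fin (na + nb) => P) ≤ 1 :=
  two_stream_evariable_general qa qb hqa hqb na nb P p0 hp0 ra rb hra hrb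
end

section
/- Let n_a, n_b be positive integers, n = n_a + n_b, and let θ*_a, θ*_b ∈ (0,1) with θ_0 = (n_a/n)·θ*_a + (n_b/n)·θ*_b. For the Bernoulli pmf p_η(y) = η^y (1−η)^{1−y} on {0,1}, and for every θ ∈ [0,1], the expectation under Y_1, …, Y_n drawn i.i.d. Bernoulli(θ) of the product ∏_{i=1}^{n_a} p_{θ*_a}(Y_i)/p_{θ_0}(Y_i) · ∏_{i=n_a+1}^{n} p_{θ*_b}(Y_i)/p_{θ_0}(Y_i) is at most 1. -/
/-!
Under the null, the expectation factorises over the coordinates. The expected likelihood ratio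
`E_θ[p_η(Y) / p_{θ₀}(Y)]` of a single outcome is affine in `η` and equals `1` at `η = θ₀`;
since `θ₀` is the average of the alternatives used in the `n` coordinates, the `n` factors are
nonnegative numbers with average `1`, and such numbers have product at most `1`
(`z ≤ exp (z - 1)`).
-/

open Finset Real

theorem prod_le_one_of_sum_eq_card {ι : Type*} {s : Finset ι} {z : ι → ℝ}
    (hz : ∀ i ∈ s, 0 ≤ z i) (hsum : ∑ i ∈ s, z i = #s) : ∏ i ∈ s, z i ≤ 1 :=
  calc ∏ i ∈ s, z i
      ≤ ∏ i ∈ s, exp (z i - 1) :=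
        prod_le_prod hz fun i _ => by linarith [add_one_le_exp (z i - 1)]
    _ = exp (∑ i ∈ s, (z i - 1)) := (exp_sum _ _).symm
    _ = 1 := by simp [sum_sub_distrib, hsum]

noncomputable def bernoulliPmf (η : ℝ) (y : Fin 2) : ℝ := η ^ (y : ℕ) * (1 - η) ^ (1 - (y : ℕ))

theorem bernoulliPmf_nonneg {η : ℝ} (hη : η ∈ Set.Icc 0 1) (y : Fin 2) : 0 ≤ bernoulliPmf η y :=
  mul_nonneg (pow_nonneg hη.1 _) (pow_nonneg (sub_nonneg.2 hη.2) _)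

noncomputable def bernoulliRatioMean (θ θ₀ η : ℝ) : ℝ :=
  ∑ y, bernoulliPmf θ y * (bernoulliPmf η y / bernoulliPmf θ₀ y)

theorem bernoulliRatioMean_eq (θ θ₀ η : ℝ) :
    bernoulliRatioMean θ θ₀ η = (1 - θ) * (1 - η) / (1 - θ₀) + θ * η / θ₀ := by
  simp only [bernoulliRatioMean, bernoulliPmf, Fin.sum_univ_two, Fin.val_zero, Fin.val_one,
    pow_zero, pow_one, tsub_zero, tsub_self, one_mul, mul_one]
  ring

theorem bernoulliRatioMean_nonneg {θ θ₀ η : ℝ} (hθ : θ ∈ Set.Icc 0 1) (hθ₀ : θ₀ ∈ Set.Icc 0 1)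
    (hη : η ∈ Set.Icc 0 1) : 0 ≤ bernoulliRatioMean θ θ₀ η :=
  sum_nonneg fun y _ => mul_nonneg (bernoulliPmf_nonneg hθ y)
    (div_nonneg (bernoulliPmf_nonneg hη y) (bernoulliPmf_nonneg hθ₀ y))

theorem sum_bernoulliRatioMean_eq_card {ι : Type*} {s : Finset ι} {θ θ₀ : ℝ} {η : ι → ℝ}
    (hθ₀ : θ₀ ∈ Set.Ioo 0 1) (hmean : ∑ i ∈ s, η i = #s * θ₀) :
    ∑ i ∈ s, bernoulliRatioMean θ θ₀ (η i) = #s := by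
  have h₀ : θ₀ ≠ 0 := hθ₀.1.ne'
  have h₁ : 1 - θ₀ ≠ 0 := (sub_pos.2 hθ₀.2).ne'
  simp only [bernoulliRatioMean_eq, sum_add_distrib, ← sum_div, ← mul_sum, sum_sub_distrib,
    sum_const, nsmul_eq_mul, mul_one, hmean]
  field_simp
  ring

theorem sum_prod_bernoulliPmf_mul_prod_ratio_le_one {ι : Type*} [Fintype ι] [DecidableEq ι]
    {θ θ₀ : ℝ} {η : ι → ℝ} (hθ : θ ∈ Set.Icc 0 1) (hη : ∀ i, η i ∈ Set.Icc 0 1)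
    (hθ₀ : θ₀ ∈ Set.Ioo 0 1)
    (hmean : ∑ i, η i = Fintype.card ι * θ₀) :
    ∑ x : ι → Fin 2, (∏ i, bernoulliPmf θ (x i)) *
      ∏ i, bernoulliPmf (η i) (x i) / bernoulliPmf θ₀ (x i) ≤ 1 :=
  calc _ = ∏ i, bernoulliRatioMean θ θ₀ (η i) := by
        simp only [bernoulliRatioMean, Fintype.prod_sum, prod_mul_distrib]
    _ ≤ 1 := prod_le_one_of_sum_eq_card
        (fun i _ => bernoulliRatioMean_nonneg hθ (Set.Ioo_subset_Icc_self hθ₀) (hη i))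
        (sum_bernoulliRatioMean_eq_card hθ₀ hmean)

theorem bernoulli_two_stream_evariable_general (na nb : ℕ) (hna : 0 < na)
    (θa θb : ℝ) (hθa : θa ∈ Set.Ioo (0 : ℝ) 1) (hθb : θb ∈ Set.Ioo (0 : ℝ) 1)
    (θ : ℝ) (hθ : θ ∈ Set.Icc (0 : ℝ) 1)
    (p : ℝ → Fin 2 → ℝ) (hpdef : p = fun (η : ℝ) (y : Fin 2) => η ^ (y : ℕ) * (1 - η) ^ (1 - (y : ℕ)))
    (θ0 : ℝ)
    (hθ0 : θ0 = ((na : ℝ) / ((na : ℝ) + (nb : ℝ))) * θa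
        + ((nb : ℝ) / ((na : ℝ) + (nb : ℝ))) * θb) :
    ∑ x : Fin (na + nb) → Fin 2,
        (∏ i : Fin (na + nb), p θ (x i)) *
          ∏ i : Fin (na + nb),
            (if (i : ℕ) < na then p θa (x i) / p θ0 (x i) else p θb (x i) / p θ0 (x i)) ≤ 1 := by
  rw [show p = bernoulliPmf from hpdef]
  let η : Fin (na + nb) → ℝ := fun i => if (i : ℕ) < na then θa else θb
  have hn : (na : ℝ) + nb ≠ 0 := by positivity
  have hθ0_mem : θ0 ∈ Set.Ioo 0 1 := by
    rw [hθ0]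
    exact convex_Ioo (𝕜 := ℝ) 0 1 hθa hθb (by positivity) (by positivity) (by field_simp)
  have hmean : ∑ i, η i = Fintype.card (Fin (na + nb)) * θ0 := by
    simp only [η, Fin.sum_univ_add, Fin.val_castAdd, Fin.is_lt, Fin.val_natAdd, add_lt_iff_neg_left,
      not_lt_zero, if_true, if_false, sum_const, card_univ, Fintype.card_fin, nsmul_eq_mul,
      Nat.cast_add, hθ0]
    field_simp
  have hη : ∀ i, η i ∈ Set.Icc 0 1 := fun i => by
    by_cases h : (i : ℕ) < na <;> simp only [η, h, if_true, if_false]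
    exacts [Set.Ioo_subset_Icc_self hθa, Set.Ioo_subset_Icc_self hθb]
  convert sum_prod_bernoulliPmf_mul_prod_ratio_le_one hθ hη hθ0_mem hmean using 4 with x _ i
  split_ifs with h <;> simp only [η, h, if_true, if_false]

/-- equation (3.4) is an E-variable. For the Bernoulli pmf
`p_η(y) = η^y (1−η)^{1−y}` on `{0,1}`, `θ*_a, θ*_b ∈ (0,1)`,
`θ_0 = (n_a/n)·θ*_a + (n_b/n)·θ*_b`, and any `θ ∈ [0,1]`, the expectation, under `n` i.i.d.
Bernoulli(θ) outcomes, of the product of likelihood ratios is at most `1`. -/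
theorem bernoulli_two_stream_evariable (na nb : ℕ) (hna : 0 < na) (hnb : 0 < nb)
    (θa θb : ℝ) (hθa : θa ∈ Set.Ioo (0 : ℝ) 1) (hθb : θb ∈ Set.Ioo (0 : ℝ) 1)
    (θ : ℝ) (hθ : θ ∈ Set.Icc (0 : ℝ) 1)
    (p : ℝ → Fin 2 → ℝ) (hpdef : p = fun (η : ℝ) (y : Fin 2) => η ^ (y : ℕ) * (1 - η) ^ (1 - (y : ℕ)))
    (θ0 : ℝ)
    (hθ0 : θ0 = ((na : ℝ) / ((na : ℝ) + (nb : ℝ))) * θa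
        + ((nb : ℝ) / ((na : ℝ) + (nb : ℝ))) * θb) :
    ∑ x : Fin (na + nb) → Fin 2,
        (∏ i : Fin (na + nb), p θ (x i)) *
          ∏ i : Fin (na + nb),
            (if (i : ℕ) < na then p θa (x i) / p θ0 (x i) else p θb (x i) / p θ0 (x i)) ≤ 1 :=
  bernoulli_two_stream_evariable_general na nb hna θa θb hθa hθb θ hθ p hpdef θ0 hθ0
end

section
/- Let μ be a σ-finite measure on a measurable space Y and let {p_θ : θ ∈ Θ} be a family of probability densities with respect to μ. Fix θ*_a, θ*_b ∈ Θ, positive integers n_a, n_b with n = n_a + n_b, and suppose there exists θ° ∈ Θ such that p_{θ°} = (n_a/n)·p_{θ*_a} + (n_b/n)·p_{θ*_b} μ-almost everywhere (convexity of the model). Let Q = P_{θ*_a}^{⊗n_a} ⊗ P_{θ*_b}^{⊗n_b} on Y^n and let s(x_1,…,x_n) = ∏_{i=1}^{n_a} p_{θ*_a}(x_i)/p_{θ°}(x_i) · ∏_{i=n_a+1}^{n} p_{θ*_b}(x_i)/p_{θ°}(x_i). Then for every nonnegative measurable function s' on Y^n satisfying ∫ s' dP_θ^{⊗n} ≤ 1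 for all θ ∈ Θ, one has ∫ log s' dQ ≤ ∫ log s dQ (expectations taken in the extended reals). -/
/-!
By convexity, `p θ0` vanishes only where `p θa` and `p θb` do, so `Q` has density `s` with
respect to `R = P_{θ0}^{⊗n}`: `s` is the likelihood ratio `dQ/dR`. For an E-variable `s'` put
`T = s'/s`; then `E_Q[T] ≤ E_R[s'] ≤ 1`, so `E_Q[log T] ≤ E_Q[T - 1] ≤ 0`, and
`log s' = log T + log s` holds `Q`-a.s. Since the negative part of `log s` has `Q`-expectation at
most `E_Q[1/s] ≤ 1`, the two expectations may be added without meeting `⊤ - ⊤`.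
-/

open MeasureTheory ENNReal

/-- The positive part of an extended real, as an element of `ℝ≥0∞`. -/
noncomputable def ePos (x : EReal) : ℝ≥0∞ := if x = ⊤ then ⊤ else ENNReal.ofReal x.toReal

/-- The expectation of an extended-real-valued function, defined in the extended reals as
the difference of the lower integrals of the positive and the negative part. -/
noncomputable def eIntegral {α : Type*} [MeasurableSpace α] (ν : Measure α)
    (g : α → EReal) : EReal :=
  ((∫⁻ x, ePos (g x) ∂ν : ℝ≥0∞) : EReal) - ((∫⁻ x, ePos (-(g x)) ∂ν : ℝ≥0∞) : EReal)

lemma toENNReal_log_le_tsub_one (t : ℝ≥0∞) : (log t).toENNReal ≤ t - 1 := by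
  rcases eq_or_ne t ⊤ with rfl | ht
  · simp
  rcases eq_or_ne t 0 with rfl | h0
  · simp
  rw [log_pos_real h0 ht, EReal.real_coe_toENNReal, ← ENNReal.ofReal_toReal ht,
    ← ENNReal.ofReal_one, ← ENNReal.ofReal_sub _ zero_le_one, ENNReal.toReal_ofReal toReal_nonneg]
  exact ENNReal.ofReal_le_ofReal (Real.log_le_sub_one_of_pos (toReal_pos h0 ht))

lemma toENNReal_log_le_self (t : ℝ≥0∞) : (log t).toENNReal ≤ t :=
  (toENNReal_log_le_tsub_one t).trans tsub_le_self

lemma one_tsub_le_toENNReal_neg_log (t : ℝ≥0∞) : 1 - t ≤ (-log t).toENNReal := by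
  rcases eq_or_ne t ⊤ with rfl | ht
  · simp
  rcases eq_or_ne t 0 with rfl | h0
  · simp
  rw [log_pos_real h0 ht, ← EReal.coe_neg, EReal.real_coe_toENNReal, ← ENNReal.ofReal_toReal ht,
    ← ENNReal.ofReal_one, ← ENNReal.ofReal_sub _ toReal_nonneg, ENNReal.toReal_ofReal toReal_nonneg]
  have := Real.log_le_sub_one_of_pos (toReal_pos h0 ht)
  exact ENNReal.ofReal_le_ofReal (by linarith)

-- `(u + v)⁺ - (u + v)⁻ = (u⁺ - u⁻) + (v⁺ - v⁻)`, with the negative parts moved across so that no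
-- subtraction occurs.
lemma EReal.toENNReal_add_add_toENNReal_neg (u v : EReal) (hv_bot : v ≠ ⊥) (hv_top : v ≠ ⊤) :
    (u + v).toENNReal + ((-u).toENNReal + (-v).toENNReal) =
      (-(u + v)).toENNReal + (u.toENNReal + v.toENNReal) := by
  lift v to ℝ using ⟨hv_top, hv_bot⟩
  induction u using EReal.rec with
  | bot => simp
  | top => simp
  | coe r =>
    simp only [← EReal.coe_add, ← EReal.coe_neg, EReal.real_coe_toENNReal]
    rw [← ENNReal.toReal_eq_toReal_iff' (by finiteness) (by finiteness)]
    simp only [ENNReal.toReal_add, ENNReal.add_eq_top, ENNReal.ofReal_ne_top, ne_eq, or_self,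
      not_false_eq_true, ENNReal.toReal_ofReal']
    grind

lemma EReal.coe_ennreal_sub_le_sub_of_add_le {a b c d : ℝ≥0∞} (hd : d ≠ ⊤) (h : a + d ≤ c + b) :
    (a : EReal) - b ≤ c - d := by
  rcases eq_or_ne b ⊤ with rfl | hb
  · simp
  rcases eq_or_ne c ⊤ with rfl | hc
  · lift d to NNReal using hd
    simp [EReal.coe_nnreal_eq_coe_real]
  have ha : a ≠ ⊤ := ne_top_of_le_ne_top (ENNReal.add_ne_top.mpr ⟨hc, hb⟩) (le_self_add.trans h)
  lift a to NNReal using ha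
  lift b to NNReal using hb
  lift c to NNReal using hc
  lift d to NNReal using hd
  simp only [EReal.coe_nnreal_eq_coe_real, ← EReal.coe_sub, EReal.coe_le_coe_iff]
  have : (a : ℝ) + d ≤ c + b := by exact_mod_cast h
  linarith

section Expectation

variable {α : Type*} [MeasurableSpace α] {ν : Measure α}

-- `ePos` is definitionally `EReal.toENNReal`.
lemma eIntegral_eq (ν : Measure α) (g : α → EReal) :
    eIntegral ν g = ((∫⁻ x, (g x).toENNReal ∂ν : ℝ≥0∞) : EReal) -
      ((∫⁻ x, (-g x).toENNReal ∂ν : ℝ≥0∞) : EReal) := rfl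

lemma eIntegral_congr_ae {f g : α → EReal} (h : f =ᵐ[ν] g) : eIntegral ν f = eIntegral ν g := by
  rw [eIntegral_eq, eIntegral_eq]
  congr 2 <;> exact lintegral_congr_ae (h.mono fun x hx => by simp only [hx])

lemma lintegral_tsub_one_le_lintegral_one_tsub [IsProbabilityMeasure ν] {T : α → ℝ≥0∞}
    (hT : Measurable T) (hT1 : ∫⁻ x, T x ∂ν ≤ 1) :
    ∫⁻ x, (T x - 1) ∂ν ≤ ∫⁻ x, (1 - T x) ∂ν := by
  have hmax : ∫⁻ x, (T x - 1) ∂ν + 1 = ∫⁻ x, (1 - T x) ∂ν + ∫⁻ x, T x ∂ν := by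
    calc ∫⁻ x, (T x - 1) ∂ν + 1 = ∫⁻ x, (T x - 1 + 1) ∂ν := by
          rw [lintegral_add_right _ measurable_const, lintegral_one, measure_univ]
      _ = ∫⁻ x, (1 - T x + T x) ∂ν := by
          simp only [tsub_add_eq_max, max_comm]
      _ = ∫⁻ x, (1 - T x) ∂ν + ∫⁻ x, T x ∂ν := lintegral_add_right _ hT
  refine (ENNReal.add_le_add_iff_right one_ne_top).mp ?_
  rw [hmax]
  gcongr

lemma eIntegral_log_nonpos [IsProbabilityMeasure ν] {T : α → ℝ≥0∞} (hT : Measurable T)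
    (hT1 : ∫⁻ x, T x ∂ν ≤ 1) : eIntegral ν (fun x => log (T x)) ≤ 0 := by
  rw [eIntegral_eq, EReal.sub_nonpos, EReal.coe_ennreal_le_coe_ennreal_iff]
  calc ∫⁻ x, (log (T x)).toENNReal ∂ν ≤ ∫⁻ x, (T x - 1) ∂ν :=
        lintegral_mono fun x => toENNReal_log_le_tsub_one (T x)
    _ ≤ ∫⁻ x, (1 - T x) ∂ν := lintegral_tsub_one_le_lintegral_one_tsub hT hT1
    _ ≤ ∫⁻ x, (-log (T x)).toENNReal ∂ν :=
        lintegral_mono fun x => one_tsub_le_toENNReal_neg_log (T x)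

lemma eIntegral_add_le {u v : α → EReal} (hu : Measurable u) (hv : Measurable v)
    (hv_fin : ∀ᵐ x ∂ν, v x ≠ ⊥ ∧ v x ≠ ⊤) (hu_pos : ∫⁻ x, (u x).toENNReal ∂ν ≠ ⊤)
    (hu_nonpos : eIntegral ν u ≤ 0) (hv_neg : ∫⁻ x, (-v x).toENNReal ∂ν ≠ ⊤) :
    eIntegral ν (fun x => u x + v x) ≤ eIntegral ν v := by
  rw [eIntegral_eq, EReal.sub_nonpos, EReal.coe_ennreal_le_coe_ennreal_iff] at hu_nonpos
  rw [eIntegral_eq, eIntegral_eq]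
  set Up := ∫⁻ x, (u x).toENNReal ∂ν
  set Um := ∫⁻ x, (-u x).toENNReal ∂ν
  set Vp := ∫⁻ x, (v x).toENNReal ∂ν
  set Vm := ∫⁻ x, (-v x).toENNReal ∂ν
  set Wp := ∫⁻ x, (u x + v x).toENNReal ∂ν
  set Wm := ∫⁻ x, (-(u x + v x)).toENNReal ∂ν
  have hparts : Wp + (Um + Vm) = Wm + (Up + Vp) := by
    simp only [Wp, Wm, Up, Um, Vp, Vm]
    rw [← lintegral_add_left (f := fun x => (-u x).toENNReal) hu.neg.ereal_toENNReal,
      ← lintegral_add_left hu.ereal_toENNReal,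
      ← lintegral_add_left (f := fun x => (u x + v x).toENNReal) (hu.add hv).ereal_toENNReal,
      ← lintegral_add_left (f := fun x => (-(u x + v x)).toENNReal) (hu.add hv).neg.ereal_toENNReal]
    exact lintegral_congr_ae
      (hv_fin.mono fun x hx => EReal.toENNReal_add_add_toENNReal_neg _ _ hx.1 hx.2)
  refine EReal.coe_ennreal_sub_le_sub_of_add_le hv_neg ?_
  rcases eq_or_ne Um ⊤ with hU | hU
  · have htop : Wm + Vp = ⊤ := by
      rw [hU, top_add, add_top] at hparts
      simpa [ENNReal.add_eq_top, hu_pos] using hparts.symm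
    rw [add_comm Vp, htop]
    exact le_top
  · refine (ENNReal.add_le_add_iff_right hU).mp ?_
    calc Wp + Vm + Um = Wm + (Up + Vp) := by rw [← hparts]; ring
      _ ≤ Wm + (Um + Vp) := by gcongr
      _ = Vp + Wm + Um := by ring

end Expectation

section LikelihoodRatio

variable {α : Type*} [MeasurableSpace α]

lemma lintegral_mul_inv_le_of_withDensity (μ : Measure α) {s g : α → ℝ≥0∞} (hs : Measurable s)
    (hg : Measurable g) : ∫⁻ x, g x * (s x)⁻¹ ∂μ.withDensity s ≤ ∫⁻ x, g x ∂μ := by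
  rw [lintegral_withDensity_eq_lintegral_mul _ hs (g := fun x => g x * (s x)⁻¹) (hg.mul hs.inv)]
  refine lintegral_mono fun x => ?_
  calc s x * (g x * (s x)⁻¹) = g x * (s x * (s x)⁻¹) := by ring
    _ ≤ g x * 1 := by gcongr; exact ENNReal.mul_inv_le_one (s x)
    _ = g x := mul_one _

lemma ae_withDensity_ne_zero_ne_top {μ : Measure α} {s : α → ℝ≥0∞} (hs : Measurable s)
    [IsFiniteMeasure (μ.withDensity s)] : ∀ᵐ x ∂μ.withDensity s, s x ≠ 0 ∧ s x ≠ ⊤ := by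
  have hfin : ∀ᵐ x ∂μ, s x ≠ ⊤ := by
    refine (ae_lt_top hs ?_).mono fun x hx => hx.ne
    rw [← setLIntegral_univ, ← withDensity_apply _ MeasurableSet.univ]
    exact measure_ne_top _ _
  filter_upwards [(ae_withDensity_iff hs).mpr (ae_of_all _ fun x hx => hx),
    (withDensity_absolutelyContinuous μ s).ae_le hfin] with x h0 htop
  exact ⟨h0, htop⟩

theorem eIntegral_log_le_eIntegral_log_of_withDensity {μ : Measure α} [IsProbabilityMeasure μ]
    {s s' : α → ℝ≥0∞} (hs : Measurable s) [IsProbabilityMeasure (μ.withDensity s)]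
    (hs' : Measurable s') (hs'μ : ∫⁻ x, s' x ∂μ ≤ 1) :
    eIntegral (μ.withDensity s) (fun x => log (s' x)) ≤
      eIntegral (μ.withDensity s) (fun x => log (s x)) := by
  set Q := μ.withDensity s
  have hs_fin := ae_withDensity_ne_zero_ne_top (μ := μ) hs
  have hT : ∫⁻ x, s' x * (s x)⁻¹ ∂Q ≤ 1 :=
    (lintegral_mul_inv_le_of_withDensity μ hs hs').trans hs'μ
  have hs_inv : ∫⁻ x, (s x)⁻¹ ∂Q ≤ 1 := by
    simpa using lintegral_mul_inv_le_of_withDensity μ hs (measurable_const (a := (1 : ℝ≥0∞)))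
  have hlog : (fun x => log (s' x)) =ᵐ[Q] fun x => log (s' x * (s x)⁻¹) + log (s x) := by
    filter_upwards [hs_fin] with x hx
    rw [log_mul_add, log_inv, log_pos_real hx.1 hx.2, ← sub_eq_add_neg, EReal.sub_add_cancel]
  rw [eIntegral_congr_ae hlog]
  refine eIntegral_add_le (hs'.mul hs.inv).ennreal_log hs.ennreal_log ?_ ?_
    (eIntegral_log_nonpos (hs'.mul hs.inv) hT) ?_
  · filter_upwards [hs_fin] with x hx
    simp [hx.1, hx.2]
  · exact ne_top_of_le_ne_top one_ne_top
      ((lintegral_mono fun x => toENNReal_log_le_self _).trans hT)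
  · refine ne_top_of_le_ne_top one_ne_top (le_trans (lintegral_mono fun x => ?_) hs_inv)
    rw [← log_inv]
    exact toENNReal_log_le_self _

end LikelihoodRatio

lemma withDensity_withDensity_div {α : Type*} [MeasurableSpace α] (μ : Measure α)
    {f g : α → ℝ≥0∞} (hf : Measurable f) (hg : Measurable g) (hg_top : ∀ᵐ x ∂μ, g x ≠ ⊤)
    (hfg : ∀ᵐ x ∂μ, g x = 0 → f x = 0) :
    (μ.withDensity g).withDensity (fun x => f x / g x) = μ.withDensity f := by
  rw [← withDensity_mul μ hg (g := fun x => f x / g x) (hf.div hg)]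
  refine withDensity_congr_ae ?_
  filter_upwards [hg_top, hfg] with x htop hzero
  exact ENNReal.mul_div_cancel' hzero fun h => absurd h htop

lemma Measure.pi_eq_withDensity_prod {ι : Type*} [Fintype ι] {X : ι → Type*}
    [∀ i, MeasurableSpace (X i)] {μ ν : ∀ i, Measure (X i)} [∀ i, IsProbabilityMeasure (μ i)]
    [∀ i, SigmaFinite (ν i)] {f : ∀ i, X i → ℝ≥0∞} (hf : ∀ i, Measurable (f i))
    (hν : ∀ i, ν i = (μ i).withDensity (f i)) :
    Measure.pi ν = (Measure.pi μ).withDensity fun x => ∏ i, f i (x i) := by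
  refine Measure.pi_eq fun S hS => ?_
  have hfS : ∀ i, Measurable ((S i).indicator (f i)) := fun i => (hf i).indicator (hS i)
  have hind : (Set.univ.pi S).indicator (fun x => ∏ i, f i (x i)) =
      fun x => ∏ i, (S i).indicator (f i) (x i) := by
    classical
    ext x
    simp only [Set.indicator_apply, Set.mem_univ_pi, Fintype.prod_ite_zero]
  rw [withDensity_apply _ (MeasurableSet.univ_pi hS),
    ← lintegral_indicator (MeasurableSet.univ_pi hS), hind,
    ProbabilityTheory.lintegral_prod_eq_prod_lintegral_of_indepFun _ _
      (ProbabilityTheory.iIndepFun_pi fun i => (hfS i).aemeasurable)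
      fun i => (hfS i).comp (measurable_pi_apply i)]
  refine Finset.prod_congr rfl fun i _ => ?_
  rw [hν i, withDensity_apply _ (hS i), ← lintegral_indicator (hS i),
    (measurePreserving_eval μ i).lintegral_comp (hfS i)]

lemma Measure.pi_ite_eq_withDensity {ι Y : Type*} [Fintype ι] [MeasurableSpace Y]
    (q : ι → Prop) [DecidablePred q] {Pa Pb P0 : Measure Y} [IsProbabilityMeasure Pa]
    [IsProbabilityMeasure Pb] [IsProbabilityMeasure P0] {fa fb : Y → ℝ≥0∞} (hfa : Measurable fa)
    (hfb : Measurable fb) (ha : Pa = P0.withDensity fa) (hb : Pb = P0.withDensity fb) :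
    Measure.pi (fun i => if q i then Pa else Pb) =
      (Measure.pi fun _ : ι => P0).withDensity fun x => ∏ i, if q i then fa (x i) else fb (x i) := by
  have : ∀ i, SigmaFinite (if q i then Pa else Pb) := fun i => by
    split_ifs <;> infer_instance
  have hprod : (fun x : ι → Y => ∏ i, if q i then fa (x i) else fb (x i)) =
      fun x => ∏ i, (if q i then fa else fb) (x i) := by
    ext x
    congr 1 with i
    split_ifs <;> rfl
  rw [hprod]
  refine Measure.pi_eq_withDensity_prod (fun i => ?_) fun i => ?_
  · split_ifs <;> assumption
  · split_ifs <;> assumption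

theorem two_stream_evariable_GRO_general {Y : Type*} [MeasurableSpace Y]
    (μ : Measure Y) {Θ : Type*}
    (p : Θ → Y → ℝ≥0∞) (hpm : ∀ θ, Measurable (p θ)) (hp1 : ∀ θ, ∫⁻ y, p θ y ∂μ = 1)
    (P : Θ → Measure Y) [∀ θ, IsProbabilityMeasure (P θ)]
    (hP : ∀ θ, P θ = μ.withDensity (p θ))
    (θa θb θ0 : Θ) (na nb : ℕ) (hna : 0 < na) (hnb : 0 < nb)
    (hconv : p θ0 =ᵐ[μ] fun y =>
      (↑na / (↑na + ↑nb) : ℝ≥0∞) * p θa y + (↑nb / (↑na + ↑nb) : ℝ≥0∞) * p θb y)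
    (Q : Measure (Fin (na + nb) → Y))
    (hQ : Q = Measure.pi fun i : Fin (na + nb) => if (i : ℕ) < na then P θa else P θb)
    (s : (Fin (na + nb) → Y) → ℝ≥0∞)
    (hs : s = fun x => ∏ i : Fin (na + nb),
      (if (i : ℕ) < na then p θa (x i) / p θ0 (x i) else p θb (x i) / p θ0 (x i)))
    (s' : (Fin (na + nb) → Y) → ℝ≥0∞) (hs'm : Measurable s')
    (hs'E : ∀ θ, ∫⁻ x, s' x ∂(Measure.pi fun _ : Fin (na + nb) => P θ) ≤ 1) :
    eIntegral Q (fun x => ENNReal.log (s' x)) ≤ eIntegral Q (fun x => ENNReal.log (s x)) := by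
  have hp0_top : ∀ᵐ y ∂μ, p θ0 y ≠ ⊤ :=
    (ae_lt_top (hpm θ0) (by rw [hp1]; exact one_ne_top)).mono fun y hy => hy.ne
  have hp0_zero : ∀ᵐ y ∂μ, p θ0 y = 0 → p θa y = 0 ∧ p θb y = 0 := by
    filter_upwards [hconv] with y hy h0
    simpa [h0, eq_comm (a := (0 : ℝ≥0∞)), hna.ne', hnb.ne'] using hy
  have hP_density : ∀ θ, (∀ᵐ y ∂μ, p θ0 y = 0 → p θ y = 0) →
      P θ = (P θ0).withDensity fun y => p θ y / p θ0 y := fun θ hθ => by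
    rw [hP, hP, withDensity_withDensity_div μ (hpm θ) (hpm θ0) hp0_top hθ]
  have hQ_density : Q = (Measure.pi fun _ : Fin (na + nb) => P θ0).withDensity s := by
    rw [hQ, hs]
    exact Measure.pi_ite_eq_withDensity (fun i : Fin (na + nb) => (i : ℕ) < na)
      (fa := fun y => p θa y / p θ0 y) (fb := fun y => p θb y / p θ0 y) (by fun_prop) (by fun_prop)
      (hP_density θa (hp0_zero.mono fun y h h0 => (h h0).1))
      (hP_density θb (hp0_zero.mono fun y h h0 => (h h0).2))
  have hs_meas : Measurable s := by
    rw [hs]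
    refine Finset.measurable_prod _ fun i _ => ?_
    split_ifs <;> fun_prop
  have : IsProbabilityMeasure ((Measure.pi fun _ : Fin (na + nb) => P θ0).withDensity s) := by
    rw [← hQ_density, hQ]
    infer_instance
  rw [hQ_density]
  exact eIntegral_log_le_eIntegral_log_of_withDensity hs_meas hs'm (hs'E θ0)

/-- Theorem 1, part 2. If the model `{p_θ}` is convex in the sense that the
mixture `(n_a/n)·p_{θ*_a} + (n_b/n)·p_{θ*_b}` is again a member `p_{θ°}` of the model, then the
simple two-stream statistic `s` is the `(θ*_a, θ*_b)`-GRO E-variable: every E-variable `s'`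
for `n` outcomes satisfies `E_Q[log s'] ≤ E_Q[log s]` (expectations in the extended reals). -/
theorem two_stream_evariable_GRO {Y : Type*} [MeasurableSpace Y]
    (μ : Measure Y) [SigmaFinite μ] {Θ : Type*}
    (p : Θ → Y → ℝ≥0∞) (hpm : ∀ θ, Measurable (p θ)) (hp1 : ∀ θ, ∫⁻ y, p θ y ∂μ = 1)
    (P : Θ → Measure Y) [∀ θ, IsProbabilityMeasure (P θ)]
    (hP : ∀ θ, P θ = μ.withDensity (p θ))
    (θa θb θ0 : Θ) (na nb : ℕ) (hna : 0 < na) (hnb : 0 < nb)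
    (hconv : p θ0 =ᵐ[μ] fun y =>
      (↑na / (↑na + ↑nb) : ℝ≥0∞) * p θa y + (↑nb / (↑na + ↑nb) : ℝ≥0∞) * p θb y)
    (Q : Measure (Fin (na + nb) → Y))
    (hQ : Q = Measure.pi fun i : Fin (na + nb) => if (i : ℕ) < na then P θa else P θb)
    (s : (Fin (na + nb) → Y) → ℝ≥0∞)
    (hs : s = fun x => ∏ i : Fin (na + nb),
      (if (i : ℕ) < na then p θa (x i) / p θ0 (x i) else p θb (x i) / p θ0 (x i)))
    (s' : (Fin (na + nb) → Y) → ℝ≥0∞) (hs'm : Measurable s')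
    (hs'E : ∀ θ, ∫⁻ x, s' x ∂(Measure.pi fun _ : Fin (na + nb) => P θ) ≤ 1) :
    eIntegral Q (fun x => ENNReal.log (s' x)) ≤ eIntegral Q (fun x => ENNReal.log (s x)) :=
  two_stream_evariable_GRO_general μ p hpm hp1 P hP θa θb θ0 na nb hna hnb hconv Q hQ s hs s' hs'm
    hs'E
end

section
/- Let W be a Borel probability measure on [0,1]^2 with coordinate marginals W_a and W_b, and set m_a = ∫ θ_a dW_a(θ_a) and m_b = ∫ θ_b dW_b(θ_b). Let n_a, n_b be positive integers, n = n_a + n_b, and assume (n_a/n)m_a + (n_b/n)m_b ∈ (0,1). Then for all y_a ∈ {0,1}^{n_a} and y_b ∈ {0,1}^{n_b}, the mixture E-variable satisfies s(y_a, y_b; n_a, n_b, W) = s(y_a, y_b; n_a, n_b, m_a, m_b), where s(y_a, y_b; n_a, n_b, W) = [∏_{i=1}^{n_a} p_{W_a}(y_{i,a}) / ((n_a/n)p_{W_a}(y_{i,a}) + (n_b/n)p_{W_b}(y_{i,a}))] · [∏_{i=1}^{n_b} p_{W_b}(y_{i,b}) / ((n_a/n)p_{W_a}(y_{i,b}) +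 (n_b/n)p_{W_b}(y_{i,b}))] with p_{W_g}(y) = ∫ θ^y(1−θ)^{1−y} dW_g(θ), and s(y_a, y_b; n_a, n_b, θ*_a, θ*_b) = ∏_{i=1}^{n_a} p_{θ*_a}(y_{i,a})/p_{θ_0}(y_{i,a}) · ∏_{i=1}^{n_b} p_{θ*_b}(y_{i,b})/p_{θ_0}(y_{i,b}) with θ_0 = (n_a/n)θ*_a + (n_b/n)θ*_b and p_η(y) = η^y(1−η)^{1−y}. -/
open MeasureTheory

/-!
For `y ∈ {0,1}` the Bernoulli pmf `η ↦ η ^ y (1 - η) ^ (1 - y)` is an affine function of `η`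
(it is `η` or `1 - η`). Averaging it against a prior therefore gives the pmf at the prior mean,
and averaging it with weights `n_a / n`, `n_b / n` gives the pmf at the weighted mean `θ₀`.
So every factor of the mixture E-variable is the corresponding factor at the prior means.
-/

noncomputable def bernoulliPMF (η : ℝ) (y : Fin 2) : ℝ :=
  η ^ (y : ℕ) * (1 - η) ^ (1 - (y : ℕ))

@[simp]
lemma bernoulliPMF_zero (η : ℝ) : bernoulliPMF η 0 = 1 - η := by
  simp [bernoulliPMF]

@[simp]
lemma bernoulliPMF_one (η : ℝ) : bernoulliPMF η 1 = η := by
  simp [bernoulliPMF]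

lemma add_mul_bernoulliPMF {wa wb : ℝ} (hw : wa + wb = 1) (ηa ηb : ℝ) (y : Fin 2) :
    wa * bernoulliPMF ηa y + wb * bernoulliPMF ηb y = bernoulliPMF (wa * ηa + wb * ηb) y := by
  fin_cases y
  · simp only [Fin.zero_eta, bernoulliPMF_zero]
    linear_combination hw
  · simp

lemma integral_bernoulliPMF {μ : Measure ℝ} [IsProbabilityMeasure μ]
    (hμ : Integrable (fun θ ↦ θ) μ) (y : Fin 2) :
    ∫ θ, bernoulliPMF θ y ∂μ = bernoulliPMF (∫ θ, θ ∂μ) y := by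
  fin_cases y
  · simp [integral_sub (integrable_const 1) hμ]
  · simp

lemma integrable_id_map_of_ae_mem_Icc {α : Type*} [MeasurableSpace α] {W : Measure α}
    [IsFiniteMeasure W] {f : α → ℝ} (hf : Measurable f) {a b : ℝ}
    (h : ∀ᵐ x ∂W, f x ∈ Set.Icc a b) : Integrable (fun θ ↦ θ) (W.map f) :=
  (integrable_map_measure aestronglyMeasurable_id hf.aemeasurable).2
    (Integrable.of_mem_Icc a b hf.aemeasurable h)

lemma integral_bernoulliPMF_map {α : Type*} [MeasurableSpace α] {W : Measure α}
    [IsProbabilityMeasure W] {f : α → ℝ} (hf : Measurable f)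
    (h : ∀ᵐ x ∂W, f x ∈ Set.Icc (0 : ℝ) 1) (y : Fin 2) :
    ∫ θ, bernoulliPMF θ y ∂(W.map f) = bernoulliPMF (∫ θ, θ ∂(W.map f)) y :=
  have := Measure.isProbabilityMeasure_map (μ := W) hf.aemeasurable
  integral_bernoulliPMF (integrable_id_map_of_ae_mem_Icc hf h) y

theorem mixture_evariable_eq_mean_evariable_general
    (W : Measure (ℝ × ℝ)) [IsProbabilityMeasure W]
    (hsupp : ∀ᵐ θ ∂W, θ.1 ∈ Set.Icc (0 : ℝ) 1 ∧ θ.2 ∈ Set.Icc (0 : ℝ) 1)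
    (Wa Wb : Measure ℝ) (hWa : Wa = W.map Prod.fst) (hWb : Wb = W.map Prod.snd)
    (ma mb : ℝ) (hma : ma = ∫ θ, θ ∂Wa) (hmb : mb = ∫ θ, θ ∂Wb)
    (na nb : ℕ) (hna : 0 < na)
    (pBer : ℝ → Fin 2 → ℝ)
    (hpBer : pBer = fun (η : ℝ) (y : Fin 2) => η ^ (y : ℕ) * (1 - η) ^ (1 - (y : ℕ)))
    (pWa pWb : Fin 2 → ℝ)
    (hpWa : pWa = fun y => ∫ θ, pBer θ y ∂Wa) (hpWb : pWb = fun y => ∫ θ, pBer θ y ∂Wb)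
    (θ0 : ℝ)
    (hθ0 : θ0 = ((na : ℝ) / ((na : ℝ) + (nb : ℝ))) * ma
        + ((nb : ℝ) / ((na : ℝ) + (nb : ℝ))) * mb)
    (ya : Fin na → Fin 2) (yb : Fin nb → Fin 2) :
    (∏ i : Fin na, pWa (ya i) /
        (((na : ℝ) / ((na : ℝ) + (nb : ℝ))) * pWa (ya i)
          + ((nb : ℝ) / ((na : ℝ) + (nb : ℝ))) * pWb (ya i))) *
      (∏ i : Fin nb, pWb (yb i) /
        (((na : ℝ) / ((na : ℝ) + (nb : ℝ))) * pWa (yb i)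
          + ((nb : ℝ) / ((na : ℝ) + (nb : ℝ))) * pWb (yb i)))
      = (∏ i : Fin na, pBer ma (ya i) / pBer θ0 (ya i)) *
          (∏ i : Fin nb, pBer mb (yb i) / pBer θ0 (yb i)) := by
  have hpBer : pBer = bernoulliPMF := hpBer
  have hw : (na : ℝ) / (na + nb) + nb / (na + nb) = 1 := by
    rw [← add_div, div_self (by positivity)]
  have hpWa : pWa = bernoulliPMF ma := by
    funext y
    rw [hpWa, hpBer, hma, hWa]
    exact integral_bernoulliPMF_map measurable_fst (hsupp.mono fun _ h ↦ h.1) y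
  have hpWb : pWb = bernoulliPMF mb := by
    funext y
    rw [hpWb, hpBer, hmb, hWb]
    exact integral_bernoulliPMF_map measurable_snd (hsupp.mono fun _ h ↦ h.2) y
  simp only [hpWa, hpWb, hpBer, add_mul_bernoulliPMF hw, hθ0]

/-- equation (3.6): the mixture E-variable equals the prior-mean
E-variable. For a prior `W` on `[0,1]²` with marginals `W_a, W_b` and means `m_a, m_b`,
the Bernoulli-mixture predictive pmfs `p_{W_g}` coincide in the two-stream statistic with
the Bernoulli pmfs at the prior means: `s(y_a, y_b; n_a, n_b, W) = s(y_a, y_b; n_a, n_b, m_a, m_b)`. -/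
theorem mixture_evariable_eq_mean_evariable
    (W : Measure (ℝ × ℝ)) [IsProbabilityMeasure W]
    (hsupp : ∀ᵐ θ ∂W, θ.1 ∈ Set.Icc (0 : ℝ) 1 ∧ θ.2 ∈ Set.Icc (0 : ℝ) 1)
    (Wa Wb : Measure ℝ) (hWa : Wa = W.map Prod.fst) (hWb : Wb = W.map Prod.snd)
    (ma mb : ℝ) (hma : ma = ∫ θ, θ ∂Wa) (hmb : mb = ∫ θ, θ ∂Wb)
    (na nb : ℕ) (hna : 0 < na) (hnb : 0 < nb)
    (pBer : ℝ → Fin 2 → ℝ)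
    (hpBer : pBer = fun (η : ℝ) (y : Fin 2) => η ^ (y : ℕ) * (1 - η) ^ (1 - (y : ℕ)))
    (pWa pWb : Fin 2 → ℝ)
    (hpWa : pWa = fun y => ∫ θ, pBer θ y ∂Wa) (hpWb : pWb = fun y => ∫ θ, pBer θ y ∂Wb)
    (θ0 : ℝ)
    (hθ0 : θ0 = ((na : ℝ) / ((na : ℝ) + (nb : ℝ))) * ma
        + ((nb : ℝ) / ((na : ℝ) + (nb : ℝ))) * mb)
    (hθ0mem : θ0 ∈ Set.Ioo (0 : ℝ) 1)
    (ya : Fin na → Fin 2) (yb : Fin nb → Fin 2) :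
    (∏ i : Fin na, pWa (ya i) /
        (((na : ℝ) / ((na : ℝ) + (nb : ℝ))) * pWa (ya i)
          + ((nb : ℝ) / ((na : ℝ) + (nb : ℝ))) * pWb (ya i))) *
      (∏ i : Fin nb, pWb (yb i) /
        (((na : ℝ) / ((na : ℝ) + (nb : ℝ))) * pWa (yb i)
          + ((nb : ℝ) / ((na : ℝ) + (nb : ℝ))) * pWb (yb i)))
      = (∏ i : Fin na, pBer ma (ya i) / pBer θ0 (ya i)) *
          (∏ i : Fin nb, pBer mb (yb i) / pBer θ0 (yb i)) :=
  mixture_evariable_eq_mean_evariable_general W hsupp Wa Wb hWa hWb ma mb hma hmb na nb hna pBer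
    hpBer pWa pWb hpWa hpWb θ0 hθ0 ya yb
end

section
/- Fix positive integers n_a, n_b with n = n_a + n_b and a positive integer m. Let each block Y_(j), j = 1,…,m, consist of n_a i.i.d. Bernoulli(θ) outcomes in group a and n_b i.i.d. Bernoulli(θ) outcomes in group b, all outcomes across all blocks mutually independent, for an arbitrary θ ∈ [0,1]. For each j, let θ̂_{a,j} and θ̂_{b,j} be (0,1)-valued measurable functions of the first j−1 blocks Y^{(j−1)}. Then the product S^{(m)} = ∏_{j=1}^m s(Y_(j); n_a, n_b, θ̂_{a,j}(Y^{(j−1)}), θ̂_{b,j}(Y^{(j−1)})) satisfies E_θ[S^{(m)}] ≤ 1 for every θ ∈ [0,1], where s(y_a, y_b; n_a, n_b, θ*_a, θ*_b) = ∏_{i=1}^{n_a} p_{θ*_a}(y_{i,a})/p_{θ_0}(y_{i,a}) · ∏_{i=1}^{n_b} p_{θ*_b}(y_{i,b})/p_{θ_0}(y_{i,b}) with θ_0 = (n_a/n)θ*_a + (n_b/n)θ*_b and Bernoulli pmf p_η(y) = η^y(1−η)^{1−y}. -/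
/-!
Under the null, the `j`-th factor has conditional expectation at most `1` given the first
`j - 1` blocks, whatever the predictable parameters are; peeling off the last block then
gives `E[S^{(m)}] ≤ E[S^{(m-1)}] ≤ ⋯ ≤ 1`.

For one block, the expectation factorises as `A ^ na * B ^ nb`, where `A` and `B` are the
expected likelihood ratios `E_θ[p_{θa}/p_{θ₀}]` and `E_θ[p_{θb}/p_{θ₀}]` of a single outcome.
Both are affine in `θ`, and because `θ₀` is the pooled mean, `na * A + nb * B = na + nb`
at `θ = 0` and at `θ = 1`, hence for every `θ`. Then `x ≤ exp (x - 1)` gives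
`A ^ na * B ^ nb ≤ exp (na * A + nb * B - (na + nb)) = 1`.
-/

open Finset

noncomputable def bernoulliMass (η : ℝ) (y : Fin 2) : ℝ := η ^ (y : ℕ) * (1 - η) ^ (1 - (y : ℕ))

noncomputable def pooledMean (na nb : ℕ) (θa θb : ℝ) : ℝ :=
  na / (na + nb) * θa + nb / (na + nb) * θb

noncomputable def twoStreamE (na nb : ℕ) (y : (Fin na → Fin 2) × (Fin nb → Fin 2))
    (θa θb : ℝ) : ℝ :=
  (∏ i, bernoulliMass θa (y.1 i) / bernoulliMass (pooledMean na nb θa θb) (y.1 i)) *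
    ∏ i, bernoulliMass θb (y.2 i) / bernoulliMass (pooledMean na nb θa θb) (y.2 i)

noncomputable def expectedRatio (θ η ζ : ℝ) : ℝ :=
  ∑ v, bernoulliMass θ v * (bernoulliMass η v / bernoulliMass ζ v)

lemma bernoulliMass_nonneg {η : ℝ} (hη : η ∈ Set.Icc 0 1) (y : Fin 2) :
    0 ≤ bernoulliMass η y :=
  mul_nonneg (pow_nonneg hη.1 _) (pow_nonneg (sub_nonneg.2 hη.2) _)

lemma natCast_add_mul_pooledMean {na nb : ℕ} (hn : 0 < na + nb) (θa θb : ℝ) :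
    (na + nb) * pooledMean na nb θa θb = na * θa + nb * θb := by
  have : (na + nb : ℝ) ≠ 0 := by exact_mod_cast hn.ne'
  unfold pooledMean
  field_simp

lemma pooledMean_mem_Icc (na nb : ℕ) {θa θb : ℝ} (hθa : θa ∈ Set.Icc 0 1)
    (hθb : θb ∈ Set.Icc 0 1) : pooledMean na nb θa θb ∈ Set.Icc 0 1 := by
  obtain ⟨ha0, ha1⟩ := hθa
  obtain ⟨hb0, hb1⟩ := hθb
  refine ⟨by unfold pooledMean; positivity, ?_⟩
  calc pooledMean na nb θa θb ≤ na / (na + nb) * 1 + nb / (na + nb) * 1 := by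
        unfold pooledMean; gcongr
    _ = (na + nb : ℝ) / (na + nb) := by ring
    _ ≤ 1 := div_self_le_one _

lemma pooledMean_mem_Ioo {na nb : ℕ} (hn : 0 < na + nb) {θa θb : ℝ}
    (hθa : θa ∈ Set.Ioo 0 1) (hθb : θb ∈ Set.Ioo 0 1) : pooledMean na nb θa θb ∈ Set.Ioo 0 1 := by
  have : (na + nb : ℝ) ≠ 0 := by exact_mod_cast hn.ne'
  exact convex_Ioo (𝕜 := ℝ) (0 : ℝ) 1 hθa hθb (by positivity) (by positivity) (by field_simp)

lemma twoStreamE_nonneg (na nb : ℕ) (y : (Fin na → Fin 2) × (Fin nb → Fin 2)) {θa θb : ℝ}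
    (hθa : θa ∈ Set.Icc 0 1) (hθb : θb ∈ Set.Icc 0 1) : 0 ≤ twoStreamE na nb y θa θb := by
  have hθ₀ := pooledMean_mem_Icc na nb hθa hθb
  exact mul_nonneg
    (prod_nonneg fun i _ => div_nonneg (bernoulliMass_nonneg hθa _) (bernoulliMass_nonneg hθ₀ _))
    (prod_nonneg fun i _ => div_nonneg (bernoulliMass_nonneg hθb _) (bernoulliMass_nonneg hθ₀ _))

lemma expectedRatio_eq (θ η ζ : ℝ) :
    expectedRatio θ η ζ = (1 - θ) * ((1 - η) / (1 - ζ)) + θ * (η / ζ) := by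
  simp [expectedRatio, Fin.sum_univ_two, bernoulliMass]

lemma expectedRatio_nonneg {θ η ζ : ℝ} (hθ : θ ∈ Set.Icc 0 1) (hη : η ∈ Set.Icc 0 1)
    (hζ : ζ ∈ Set.Icc 0 1) : 0 ≤ expectedRatio θ η ζ :=
  sum_nonneg fun v _ => mul_nonneg (bernoulliMass_nonneg hθ v)
    (div_nonneg (bernoulliMass_nonneg hη v) (bernoulliMass_nonneg hζ v))

lemma natCast_mul_expectedRatio_add_natCast_mul_expectedRatio {na nb : ℕ} {θ θa θb ζ : ℝ}
    (hζ : ζ ∈ Set.Ioo 0 1) (hpool : (na + nb) * ζ = na * θa + nb * θb) :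
    na * expectedRatio θ θa ζ + nb * expectedRatio θ θb ζ = na + nb := by
  obtain ⟨hζ0, hζ1⟩ := hζ
  have : 1 - ζ ≠ 0 := by linarith
  have : ζ ≠ 0 := hζ0.ne'
  rw [expectedRatio_eq, expectedRatio_eq]
  field_simp
  linear_combination (ζ - θ) * hpool

lemma pow_mul_pow_le_one_of_mul_add_mul_le {a b : ℝ} (ha : 0 ≤ a) (hb : 0 ≤ b) (na nb : ℕ)
    (h : na * a + nb * b ≤ na + nb) : a ^ na * b ^ nb ≤ 1 := by
  have hexp {x : ℝ} (hx : 0 ≤ x) (k : ℕ) : x ^ k ≤ Real.exp (k * (x - 1)) := by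
    rw [Real.exp_nat_mul]
    exact pow_le_pow_left₀ hx (by linarith [Real.add_one_le_exp (x - 1)]) k
  calc a ^ na * b ^ nb ≤ Real.exp (na * (a - 1)) * Real.exp (nb * (b - 1)) :=
        mul_le_mul (hexp ha na) (hexp hb nb) (by positivity) (by positivity)
    _ = Real.exp (na * a + nb * b - (na + nb)) := by rw [← Real.exp_add]; ring_nf
    _ ≤ 1 := Real.exp_le_one_iff.mpr (by linarith)

lemma sum_prod_mul_prod_eq_pow_mul_pow {α R : Type*} [Fintype α] [CommSemiring R]
    (na nb : ℕ) (f g : α → R) :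
    ∑ y : (Fin na → α) × (Fin nb → α), (∏ i, f (y.1 i)) * ∏ i, g (y.2 i) =
      (∑ v, f v) ^ na * (∑ v, g v) ^ nb := by
  rw [Fintype.sum_pow, Fintype.sum_pow, sum_mul_sum, Fintype.sum_prod_type]

lemma sum_bernoulliLikelihood_mul_twoStreamE_le_one {na nb : ℕ} {θ θa θb : ℝ}
    (hθ : θ ∈ Set.Icc 0 1) (hθa : θa ∈ Set.Ioo 0 1) (hθb : θb ∈ Set.Ioo 0 1) :
    ∑ y : (Fin na → Fin 2) × (Fin nb → Fin 2),
      ((∏ i, bernoulliMass θ (y.1 i)) * ∏ i, bernoulliMass θ (y.2 i)) *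
        twoStreamE na nb y θa θb ≤ 1 := by
  rcases Nat.eq_zero_or_pos (na + nb) with hn | hn
  · obtain ⟨rfl, rfl⟩ : na = 0 ∧ nb = 0 := by omega
    simp [twoStreamE]
  set θ₀ := pooledMean na nb θa θb
  have hθ₀ := pooledMean_mem_Ioo hn hθa hθb
  have hfactor : ∑ y : (Fin na → Fin 2) × (Fin nb → Fin 2),
      ((∏ i, bernoulliMass θ (y.1 i)) * ∏ i, bernoulliMass θ (y.2 i)) *
        twoStreamE na nb y θa θb =
      expectedRatio θ θa θ₀ ^ na * expectedRatio θ θb θ₀ ^ nb := by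
    rw [expectedRatio, expectedRatio, ← sum_prod_mul_prod_eq_pow_mul_pow]
    refine sum_congr rfl fun y _ => ?_
    simp only [twoStreamE, prod_mul_distrib]
    ring
  rw [hfactor]
  exact pow_mul_pow_le_one_of_mul_add_mul_le
    (expectedRatio_nonneg hθ (Set.Ioo_subset_Icc_self hθa) (Set.Ioo_subset_Icc_self hθ₀))
    (expectedRatio_nonneg hθ (Set.Ioo_subset_Icc_self hθb) (Set.Ioo_subset_Icc_self hθ₀)) na nb
    (natCast_mul_expectedRatio_add_natCast_mul_expectedRatio hθ₀
      (natCast_add_mul_pooledMean hn θa θb)).le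

lemma sum_prod_mul_prod_predictable_le_one {B : Type*} [Fintype B] {w : B → ℝ}
    (hw : ∀ y, 0 ≤ w y) (m : ℕ) (e : (j : Fin m) → (Fin j → B) → B → ℝ)
    (he_nonneg : ∀ j h y, 0 ≤ e j h y) (he : ∀ j h, ∑ y, w y * e j h y ≤ 1) :
    ∑ x : Fin m → B,
      (∏ j, w (x j)) * ∏ j, e j (fun i => x (Fin.castLE j.isLt.le i)) (x j) ≤ 1 := by
  induction m with
  | zero => simp
  | succ m ih =>
    set F : (Fin m → B) → ℝ := fun x =>
      (∏ j, w (x j)) * ∏ j : Fin m, e j.castSucc (fun i => x (Fin.castLE j.isLt.le i)) (x j)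
    have hF : ∀ x, 0 ≤ F x := fun x =>
      mul_nonneg (prod_nonneg fun _ _ => hw _) (prod_nonneg fun _ _ => he_nonneg _ _ _)
    have hsplit : ∀ x y, let z : Fin (m + 1) → B := Fin.snoc x y
        (∏ j, w (z j)) * ∏ j, e j (fun i => z (Fin.castLE j.isLt.le i)) (z j) =
          F x * (w y * e (Fin.last m) x y) := by
      intro x y z
      have hcast : ∀ j : Fin m, (fun i => z (Fin.castLE j.castSucc.isLt.le i)) =
          fun i => x (Fin.castLE j.isLt.le i) := fun j => funext fun i =>
            Fin.snoc_castSucc (α := fun _ => B) y x (Fin.castLE j.isLt.le i)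
      have hlast : (fun i => z (Fin.castLE (Fin.last m).isLt.le i)) = x :=
        funext fun i => Fin.snoc_castSucc (α := fun _ => B) y x _
      simp only [F, z, Fin.prod_univ_castSucc, Fin.snoc_castSucc, Fin.snoc_last, hcast, hlast]
      exact mul_mul_mul_comm (_ : ℝ) _ _ _
    calc _ = ∑ x : Fin m → B, F x * ∑ y, w y * e (Fin.last m) x y := by
          rw [← (Fin.snocEquiv fun _ => B).sum_comp, Fintype.sum_prod_type, sum_comm]
          simp only [Fin.snocEquiv_apply, hsplit, mul_sum]
      _ ≤ ∑ x : Fin m → B, F x :=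
          sum_le_sum fun x _ => mul_le_of_le_one_right (hF x) (he _ _)
      _ ≤ 1 := ih (fun j => e j.castSucc) (fun j => he_nonneg j.castSucc)
          (fun j => he j.castSucc)

theorem sequential_product_evariable_le_one_general (na nb m : ℕ)
    (θ : ℝ) (hθ : θ ∈ Set.Icc (0 : ℝ) 1)
    (p : ℝ → Fin 2 → ℝ)
    (hp : p = fun (η : ℝ) (y : Fin 2) => η ^ (y : ℕ) * (1 - η) ^ (1 - (y : ℕ)))
    (s : ((Fin na → Fin 2) × (Fin nb → Fin 2)) → ℝ → ℝ → ℝ)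
    (hs : s = fun y θa θb =>
      (∏ i : Fin na, p θa (y.1 i) /
          p (((na : ℝ) / ((na : ℝ) + (nb : ℝ))) * θa
            + ((nb : ℝ) / ((na : ℝ) + (nb : ℝ))) * θb) (y.1 i)) *
      (∏ i : Fin nb, p θb (y.2 i) /
          p (((na : ℝ) / ((na : ℝ) + (nb : ℝ))) * θa
            + ((nb : ℝ) / ((na : ℝ) + (nb : ℝ))) * θb) (y.2 i)))
    (θha θhb : (j : Fin m) → (Fin (j : ℕ) → (Fin na → Fin 2) × (Fin nb → Fin 2)) → ℝ)
    (hθha : ∀ j h, θha j h ∈ Set.Ioo (0 : ℝ) 1)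
    (hθhb : ∀ j h, θhb j h ∈ Set.Ioo (0 : ℝ) 1) :
    ∑ x : Fin m → (Fin na → Fin 2) × (Fin nb → Fin 2),
      (∏ j : Fin m, (∏ i : Fin na, p θ ((x j).1 i)) * ∏ i : Fin nb, p θ ((x j).2 i)) *
        ∏ j : Fin m,
          s (x j) (θha j fun i => x (Fin.castLE (le_of_lt j.isLt) i))
            (θhb j fun i => x (Fin.castLE (le_of_lt j.isLt) i)) ≤ 1 := by
  obtain rfl : p = bernoulliMass := hp
  obtain rfl : s = twoStreamE na nb := hs
  exact sum_prod_mul_prod_predictable_le_one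
    (fun y => mul_nonneg (prod_nonneg fun i _ => bernoulliMass_nonneg hθ _)
      (prod_nonneg fun i _ => bernoulliMass_nonneg hθ _))
    m (fun j h y => twoStreamE na nb y (θha j h) (θhb j h))
    (fun j h y => twoStreamE_nonneg na nb y (Set.Ioo_subset_Icc_self (hθha j h))
      (Set.Ioo_subset_Icc_self (hθhb j h)))
    (fun j h => sum_bernoulliLikelihood_mul_twoStreamE_le_one hθ (hθha j h) (hθhb j h))

/-- safety of the sequentially updated E-value product, equations (2.4)
and (2.6). Blocks of `n_a + n_b` i.i.d. Bernoulli(θ) outcomes under the null; the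
alternative parameters used in block `j` are arbitrary `(0,1)`-valued (predictable)
functions of the previous `j − 1` blocks. Then the running product `S^{(m)}` of the simple
E-variables `s(·; n_a, n_b, θ̂_{a,j}, θ̂_{b,j})` has expectation at most `1` under every
null parameter `θ ∈ [0,1]`. -/
theorem sequential_product_evariable_le_one (na nb m : ℕ)
    (hna : 0 < na) (hnb : 0 < nb) (hm : 0 < m)
    (θ : ℝ) (hθ : θ ∈ Set.Icc (0 : ℝ) 1)
    (p : ℝ → Fin 2 → ℝ)
    (hp : p = fun (η : ℝ) (y : Fin 2) => η ^ (y : ℕ) * (1 - η) ^ (1 - (y : ℕ)))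
    (s : ((Fin na → Fin 2) × (Fin nb → Fin 2)) → ℝ → ℝ → ℝ)
    (hs : s = fun y θa θb =>
      (∏ i : Fin na, p θa (y.1 i) /
          p (((na : ℝ) / ((na : ℝ) + (nb : ℝ))) * θa
            + ((nb : ℝ) / ((na : ℝ) + (nb : ℝ))) * θb) (y.1 i)) *
      (∏ i : Fin nb, p θb (y.2 i) /
          p (((na : ℝ) / ((na : ℝ) + (nb : ℝ))) * θa
            + ((nb : ℝ) / ((na : ℝ) + (nb : ℝ))) * θb) (y.2 i)))
    (θha θhb : (j : Fin m) → (Fin (j : ℕ) → (Fin na → Fin 2) × (Fin nb → Fin 2)) → ℝ)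
    (hθha : ∀ j h, θha j h ∈ Set.Ioo (0 : ℝ) 1)
    (hθhb : ∀ j h, θhb j h ∈ Set.Ioo (0 : ℝ) 1) :
    ∑ x : Fin m → (Fin na → Fin 2) × (Fin nb → Fin 2),
      (∏ j : Fin m, (∏ i : Fin na, p θ ((x j).1 i)) * ∏ i : Fin nb, p θ ((x j).2 i)) *
        ∏ j : Fin m,
          s (x j) (θha j fun i => x (Fin.castLE (le_of_lt j.isLt) i))
            (θhb j fun i => x (Fin.castLE (le_of_lt j.isLt) i)) ≤ 1 :=
  sequential_product_evariable_le_one_general na nb m θ hθ p hp s hs θha θhb hθha hθhb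
end
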